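/- ∑_{k=1}^∞ (−1)^k (216/49)^k / C(3k,k) = −32/81 − (28√3/729)·arctan(√3/5) − (14/81)·log 7. -/

import Mathlib

open Real MeasureTheory intervalIntegral
open scoped Nat Interval

/-!
The Beta integral gives `1 / C(3n,n) = (3n+1) ∫₀¹ (t(1-t)²)ⁿ dt`. Since `t(1-t)² ≤ 4/27` on
`[0,1]`, for `|x| < 27/4` one may sum under the integral, and `∑ (3n+1) uⁿ = (1+2u)/(1-u)²` gives
`∑ xⁿ / C(3n,n) = ∫₀¹ (1+2u)/(1-u)² dt` with `u = x t(1-t)²`. At `x = -216/49` the cubic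
`49(1-u) = (6t+1)(36t²-78t+49)` factors, so the integrand has an elementary primitive (two
logarithms, an arctangent and a rational function), and its arctangent values at `0` and `1`
combine into `3 arctan(√3/5)`.
-/

lemma integral_pow_mul_one_sub_pow_succ (m n : ℕ) :
    (m + 1 : ℝ) * ∫ t in (0:ℝ)..1, t ^ m * (1 - t) ^ (n + 1) =
      (n + 1) * ∫ t in (0:ℝ)..1, t ^ (m + 1) * (1 - t) ^ n := by
  have hderiv : ∀ t ∈ Set.uIcc (0:ℝ) 1, HasDerivAt (fun t : ℝ => t ^ (m + 1) * (1 - t) ^ (n + 1))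
      ((m + 1) * (t ^ m * (1 - t) ^ (n + 1)) - (n + 1) * (t ^ (m + 1) * (1 - t) ^ n)) t := by
    intro t _
    have := (hasDerivAt_pow (m + 1) t).fun_mul (((hasDerivAt_id t).const_sub 1).fun_pow (n + 1))
    refine this.congr_deriv ?_
    simp only [Nat.cast_add, Nat.cast_one, add_tsub_cancel_right, id_eq, mul_neg, mul_one]
    ring
  have hcont : ∀ k l : ℕ, IntervalIntegrable (fun t : ℝ => t ^ k * (1 - t) ^ l) volume 0 1 :=
    fun k l => (by fun_prop : Continuous fun t : ℝ => t ^ k * (1 - t) ^ l).intervalIntegrable _ _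
  have := integral_eq_sub_of_hasDerivAt hderiv
    (((hcont m (n + 1)).const_mul _).sub ((hcont (m + 1) n).const_mul _))
  rw [integral_sub ((hcont _ _).const_mul _) ((hcont _ _).const_mul _),
    intervalIntegral.integral_const_mul, intervalIntegral.integral_const_mul] at this
  simpa [sub_eq_zero] using this

theorem integral_pow_mul_one_sub_pow (m n : ℕ) :
    ∫ t in (0:ℝ)..1, t ^ m * (1 - t) ^ n = (m ! * n ! : ℝ) / (m + n + 1)! := by
  induction n generalizing m with
  | zero => simp [integral_pow, Nat.factorial_succ, field]
  | succ n ih =>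
    have := integral_pow_mul_one_sub_pow_succ m n
    rw [ih, show m + 1 + n + 1 = m + (n + 1) + 1 by omega] at this
    rw [Nat.factorial_succ m] at this
    rw [Nat.factorial_succ n]
    push_cast at this ⊢
    rw [← mul_right_inj' (by positivity : (m : ℝ) + 1 ≠ 0), this]
    ring

theorem inv_add_choose_eq_integral (m n : ℕ) :
    ((m + n).choose m : ℝ)⁻¹ = (m + n + 1) * ∫ t in (0:ℝ)..1, t ^ m * (1 - t) ^ n := by
  rw [integral_pow_mul_one_sub_pow, Nat.cast_add_choose, Nat.factorial_succ]
  push_cast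
  field_simp

theorem inv_three_mul_choose_eq_integral (n : ℕ) :
    ((3 * n).choose n : ℝ)⁻¹ = (3 * n + 1) * ∫ t in (0:ℝ)..1, (t * (1 - t) ^ 2) ^ n := by
  have := inv_add_choose_eq_integral n (2 * n)
  rw [show n + 2 * n = 3 * n by ring] at this
  rw [this]
  simp only [mul_pow, ← pow_mul]
  push_cast
  ring_nf

theorem hasSum_three_mul_add_one_mul_geometric {𝕜 : Type*} [NormedField 𝕜] [CompleteSpace 𝕜]
    {u : 𝕜} (hu : ‖u‖ < 1) :
    HasSum (fun n : ℕ => (3 * n + 1) * u ^ n) ((1 + 2 * u) / (1 - u) ^ 2) := by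
  have hu1 : 1 - u ≠ 0 := by
    intro h; rw [sub_eq_zero] at h; simp [← h] at hu
  have h := ((hasSum_coe_mul_geometric_of_norm_lt_one hu).mul_left 3).add
    (hasSum_geometric_of_norm_lt_one hu)
  rw [show (1 + 2 * u) / (1 - u) ^ 2 = 3 * (u / (1 - u) ^ 2) + (1 - u)⁻¹ by field_simp; ring]
  exact h.congr_fun fun n => by ring

lemma mul_one_sub_sq_le {t : ℝ} (ht : t ≤ 4 / 3) : t * (1 - t) ^ 2 ≤ 4 / 27 := by
  nlinarith [mul_nonneg (sq_nonneg (3 * t - 1)) (by linarith : (0:ℝ) ≤ 4 - 3 * t)]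

theorem hasSum_pow_div_three_mul_choose {x : ℝ} (hx : |x| < 27 / 4) :
    HasSum (fun n : ℕ => x ^ n / ((3 * n).choose n : ℕ))
      (∫ t in (0:ℝ)..1, (1 + 2 * (x * (t * (1 - t) ^ 2))) / (1 - x * (t * (1 - t) ^ 2)) ^ 2) := by
  set r := |x| * (4 / 27) with hr_def
  have hr0 : 0 ≤ r := by positivity
  have hr : ‖r‖ < 1 := by rw [Real.norm_of_nonneg hr0]; linarith
  have hu : ∀ t ∈ Ι (0:ℝ) 1, ‖x * (t * (1 - t) ^ 2)‖ ≤ ‖r‖ := by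
    rw [Set.uIoc_of_le zero_le_one]
    rintro t ⟨ht0, ht1⟩
    rw [norm_mul, Real.norm_eq_abs, Real.norm_of_nonneg (by have := ht0.le; positivity),
      Real.norm_of_nonneg hr0]
    exact mul_le_mul_of_nonneg_left (mul_one_sub_sq_le (by linarith)) (abs_nonneg x)
  have hterm : ∀ n : ℕ, x ^ n / ((3 * n).choose n : ℕ) =
      ∫ t in (0:ℝ)..1, (3 * n + 1) * (x * (t * (1 - t) ^ 2)) ^ n := by
    intro n
    simp only [div_eq_mul_inv, inv_three_mul_choose_eq_integral, mul_pow,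
      intervalIntegral.integral_const_mul]
    ring
  simp only [hterm]
  refine intervalIntegral.hasSum_integral_of_dominated_convergence
    (fun n _ => (3 * n + 1) * r ^ n) (fun n => by fun_prop) (fun n => ?_) ?_
    intervalIntegrable_const (.of_forall fun t ht => ?_)
  · refine .of_forall fun t ht => ?_
    rw [norm_mul, norm_pow, Real.norm_of_nonneg (by positivity), ← Real.norm_of_nonneg hr0]
    gcongr
    exact hu t ht
  · exact .of_forall fun _ _ => (hasSum_three_mul_add_one_mul_geometric hr).summable
  · exact hasSum_three_mul_add_one_mul_geometric ((hu t ht).trans_lt hr)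

noncomputable def antideriv (t : ℝ) : ℝ :=
  -(28 / 243) * log (6 * t + 1) + (14 / 243) * log (36 * t ^ 2 - 78 * t + 49)
    - (28 / 2187) * (√3 * arctan ((12 * t - 13) * √3 / 9))
    + (49 / 243) * ((144 * t ^ 2 + 3 * t - 98) / ((6 * t + 1) * (36 * t ^ 2 - 78 * t + 49)))

lemma quadratic_pos (t : ℝ) : 0 < 36 * t ^ 2 - 78 * t + 49 := by
  nlinarith [sq_nonneg (12 * t - 13)]

lemma hasDerivAt_sqrt_three_mul_arctan (t : ℝ) :
    HasDerivAt (fun t => √3 * arctan ((12 * t - 13) * √3 / 9))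
      (27 / (36 * t ^ 2 - 78 * t + 49)) t := by
  have hs : √3 ^ 2 = 3 := sq_sqrt (by norm_num)
  have := ((((hasDerivAt_id t).const_mul 12).sub_const 13).mul_const √3).div_const 9
  refine (this.arctan.const_mul √3).congr_deriv ?_
  have hden : 1 + ((12 * id t - 13) * √3 / 9) ^ 2 = 4 * (36 * t ^ 2 - 78 * t + 49) / 27 := by
    rw [div_pow, mul_pow, hs, id]
    ring
  rw [hden]
  have := quadratic_pos t
  field_simp
  rw [hs]
  ring

lemma hasDerivAt_antideriv {t : ℝ} (ht : -(1 / 6) < t) :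
    HasDerivAt antideriv
      ((1 + 2 * (-(216 / 49) * (t * (1 - t) ^ 2))) / (1 - -(216 / 49) * (t * (1 - t) ^ 2)) ^ 2)
      t := by
  have hl : 0 < 6 * t + 1 := by linarith
  have hq := quadratic_pos t
  have hlin : HasDerivAt (fun t : ℝ => 6 * t + 1) 6 t := by
    simpa using ((hasDerivAt_id t).const_mul 6).add_const 1
  have hquad : HasDerivAt (fun t : ℝ => 36 * t ^ 2 - 78 * t + 49) (72 * t - 78) t := by
    refine ((((hasDerivAt_pow 2 t).const_mul 36).sub ((hasDerivAt_id t).const_mul 78)).add_const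
      49).congr_deriv ?_
    simp only [Nat.cast_ofNat, Nat.add_one_sub_one, pow_one, mul_one]; ring
  have hnum : HasDerivAt (fun t : ℝ => 144 * t ^ 2 + 3 * t - 98) (288 * t + 3) t := by
    refine ((((hasDerivAt_pow 2 t).const_mul 144).add ((hasDerivAt_id t).const_mul 3)).sub_const
      98).congr_deriv ?_
    simp only [Nat.cast_ofNat, Nat.add_one_sub_one, pow_one, mul_one]; ring
  have := (((((hlin.log hl.ne').const_mul (-(28 / 243))).fun_add
    ((hquad.log hq.ne').const_mul (14 / 243))).fun_sub
    ((hasDerivAt_sqrt_three_mul_arctan t).const_mul (28 / 2187))).fun_add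
    ((hnum.div (hlin.fun_mul hquad) (mul_pos hl hq).ne').const_mul (49 / 243)))
  refine this.congr_deriv ?_
  rw [show 1 - -(216 / 49) * (t * (1 - t) ^ 2) = (6 * t + 1) * (36 * t ^ 2 - 78 * t + 49) / 49 by
    ring]
  -- with the quadratic kept atomic, `field_simp` can use `hq` to clear it
  generalize hQ : 36 * t ^ 2 - 78 * t + 49 = q at hq ⊢
  field_simp
  subst hQ
  ring

/-- `(5 + √3 i)³ = 80 + 72√3 i` is a positive multiple of `(9 + 13√3 i)(9 - √3 i)`. -/
lemma arctan_sub_arctan_eq_three_mul_arctan :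
    arctan (13 * √3 / 9) - arctan (√3 / 9) = 3 * arctan (√3 / 5) := by
  have hs : √3 * √3 = 3 := mul_self_sqrt (by norm_num)
  have hs2 : √3 < 2 := by nlinarith [sqrt_nonneg 3]
  have h2 : arctan (√3 / 5) + arctan (√3 / 5) = arctan (5 * √3 / 11) := by
    rw [arctan_add (by nlinarith),
      show 1 - √3 / 5 * (√3 / 5) = 22 / 25 by linear_combination (-1 / 25) * hs]
    ring_nf
  have h3 : arctan (5 * √3 / 11) + arctan (√3 / 5) = arctan (9 * √3 / 10) := by
    rw [arctan_add (by nlinarith),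
      show 1 - 5 * √3 / 11 * (√3 / 5) = 8 / 11 by linear_combination (-1 / 11) * hs]
    ring_nf
  have h13 : arctan (13 * √3 / 9) + arctan (-(√3 / 9)) = arctan (9 * √3 / 10) := by
    rw [arctan_add (by nlinarith),
      show 1 - 13 * √3 / 9 * -(√3 / 9) = 40 / 27 by linear_combination (13 / 81) * hs]
    ring_nf
  rw [arctan_neg] at h13
  linarith

lemma antideriv_one_sub_antideriv_zero :
    antideriv 1 - antideriv 0 =
      49 / 81 - (28 * √3 / 729) * arctan (√3 / 5) - (14 / 81) * log 7 := by
  have hlog : log 49 = 2 * log 7 := by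
    rw [show (49 : ℝ) = 7 ^ 2 by norm_num, log_pow]; norm_num
  have := arctan_sub_arctan_eq_three_mul_arctan
  simp only [antideriv]
  norm_num [hlog, neg_div, arctan_neg]
  linear_combination (-(28 / 2187) * √3) * this

lemma integral_generating_integrand_eq :
    ∫ t in (0:ℝ)..1, (1 + 2 * (-(216 / 49) * (t * (1 - t) ^ 2))) /
        (1 - -(216 / 49) * (t * (1 - t) ^ 2)) ^ 2 =
      49 / 81 - (28 * √3 / 729) * arctan (√3 / 5) - (14 / 81) * log 7 := by
  have hpos : ∀ t ∈ Set.uIcc (0:ℝ) 1, 0 < 1 - -(216 / 49) * (t * (1 - t) ^ 2) := by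
    rw [Set.uIcc_of_le zero_le_one]
    rintro t ⟨ht0, -⟩
    nlinarith [mul_nonneg ht0 (sq_nonneg (1 - t))]
  rw [integral_eq_sub_of_hasDerivAt
    (fun t ht => hasDerivAt_antideriv (by rw [Set.uIcc_of_le zero_le_one] at ht; linarith [ht.1]))
    (ContinuousOn.div (by fun_prop) (by fun_prop)
      fun t ht => (pow_pos (hpos t ht) 2).ne').intervalIntegrable,
    antideriv_one_sub_antideriv_zero]

theorem stmt_8 :
    ∑' k : ℕ, (-(216/49) : ℝ)^(k+1) / ((((3*(k+1)).choose (k+1) : ℕ)) : ℝ) =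
    -(32/81) - (28*Real.sqrt 3/729)*Real.arctan (Real.sqrt 3/5) - (14/81)*Real.log 7 := by
  have hx : |(-(216 / 49) : ℝ)| < 27 / 4 := by rw [abs_of_neg (by norm_num)]; norm_num
  have := (hasSum_nat_add_iff' 1).mpr (hasSum_pow_div_three_mul_choose hx)
  rw [this.tsum_eq, integral_generating_integrand_eq]
  norm_num
  ring
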